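/- For the folded system, the p=1 external-field coefficients satisfy U_{K,1} = 𝒰_{K,1} − sinh(γ(2|K|+2))/sinh(γ), where 𝒰_{K,1} = ∏_{k∈𝒜_K, k≠0} v(q_k) + ∏_{k∈𝒜_K, k≠0̄} v(T/2 − q_k) and U_{K,1} = −∑_{i∈𝒜_K∖{0,0̄}} ∏_{k∈𝒜_K, k≠i} v(q_i − q_k). -/

import Mathlib

/-!
In exponential coordinates `x = exp (ν q)` one has
`v(q_i - q_k) = (e^γ x_i - e^{-γ} x_k) / (x_i - x_k)`, so the full sum over `𝒜_K` is a Liouville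
sum; Lagrange interpolation evaluates it to `(a^N - b^N)/(a - b)` with `a = e^γ`, `b = e^{-γ}`,
i.e. to `sinh (N γ) / sinh γ`. The terms `i = 0̄` and `i = 0` of the full sum are the two products
of `𝒰_{K,1}`: for `i = 0` the reflection `k ↦ -k` permutes `𝒜_K ∖ {0}`, except that it sends
`T/2` to `-T/2`, where `v` takes the same value.
-/

/-- The function `v(q) = sinh(νq/2 + γ)/sinh(νq/2)`. -/
noncomputable def vRS (ν γ x : ℂ) : ℂ :=
  Complex.sinh (ν * x / 2 + γ) / Complex.sinh (ν * x / 2)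

open Finset Polynomial

namespace Fintype

variable {ι : Type*} [Fintype ι] [DecidableEq ι]

theorem prod_erase_none {M : Type*} [CommMonoid M] (f : Option ι → M) :
    ∏ j ∈ univ.erase none, f j = ∏ j, f (some j) := by
  rw [← filter_ne', prod_filter, Fintype.prod_option]
  simp

theorem prod_erase_some {M : Type*} [CommMonoid M] (f : Option ι → M) (i : ι) :
    ∏ j ∈ univ.erase (some i), f j = f none * ∏ j ∈ univ.erase i, f (some j) := by
  simp only [← filter_ne', prod_filter, Fintype.prod_option]
  simp

theorem sum_eq_sum_filter_ne_ne_add {M : Type*} [AddCommMonoid M] {a b : ι} (hab : a ≠ b)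
    (f : ι → M) :
    ∑ i, f i = ∑ i ∈ univ.filter (fun i => i ≠ a ∧ i ≠ b), f i + (f a + f b) := by
  rw [← sum_pair hab, ← sum_filter_add_sum_filter_not univ (fun i => i ≠ a ∧ i ≠ b)]
  congr 2
  ext i
  simp only [mem_filter, mem_univ, true_and, mem_insert, mem_singleton]
  tauto

end Fintype

/-- Compare the top coefficient of `∏ k, (a X - b x_k)` with its divided-difference expansion at
the `N + 1` nodes `0, x_1, …, x_N`: node `0` contributes `b ^ N`, node `x_i` contributes `a - b`
times the `i`-th product. -/
theorem sub_mul_sum_prod_div_sub_eq {K ι : Type*} [Field K] [Fintype ι] [DecidableEq ι]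
    (a b : K) {x : ι → K} (hx : Function.Injective x) (hx0 : ∀ i, x i ≠ 0) :
    (a - b) * ∑ i, ∏ k ∈ univ.erase i, (a * x i - b * x k) / (x i - x k) =
      a ^ Fintype.card ι - b ^ Fintype.card ι := by
  set N := Fintype.card ι
  let v : Option ι → K := fun o => o.elim 0 x
  have hv : Set.InjOn v (univ : Finset (Option ι)) := by
    rintro (_ | i) - (_ | j) - h <;> simp_all [v, hx.eq_iff, eq_comm]
  let F : K[X] := ∏ k, (C a * X + C (-(b * x k)))
  have hF_le : ∀ k ∈ (univ : Finset ι), (C a * X + C (-(b * x k))).natDegree ≤ 1 :=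
    fun _ _ => natDegree_linear_le
  have hF_deg : F.degree < #(univ : Finset (Option ι)) := by
    have hle : F.natDegree ≤ N := (natDegree_prod_le _ _).trans <| by
      simpa [N] using sum_le_sum hF_le
    rw [card_univ, Fintype.card_option]
    exact degree_le_natDegree.trans_lt (by exact_mod_cast Nat.lt_succ_of_le hle)
  have hF_coeff : F.coeff (#(univ : Finset (Option ι)) - 1) = a ^ N := by
    simpa [F, N] using coeff_prod_of_natDegree_le univ _ 1 hF_le
  have hF_eval : ∀ y, F.eval y = ∏ k, (a * y - b * x k) := fun y => by
    simp [F, eval_prod, sub_eq_add_neg]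
  have hexpand := Lagrange.coeff_eq_sum hv hF_deg
  rw [hF_coeff, Fintype.sum_option, Fintype.prod_erase_none] at hexpand
  simp only [Fintype.prod_erase_some, hF_eval] at hexpand
  have h_none : (∏ k, (a * 0 - b * x k)) / ∏ j, (0 - x j) = b ^ N := by
    rw [← prod_div_distrib]
    exact prod_eq_pow_card fun k _ => by field_simp [hx0 k]; ring
  have h_some : ∀ i, (∏ k, (a * x i - b * x k)) / ((x i - 0) * ∏ j ∈ univ.erase i, (x i - x j)) =
      (a - b) * ∏ k ∈ univ.erase i, (a * x i - b * x k) / (x i - x k) := fun i => by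
    rw [← mul_prod_erase univ _ (mem_univ i), prod_div_distrib, sub_zero, mul_div_mul_comm,
      show a * x i - b * x i = (a - b) * x i by ring, mul_div_cancel_right₀ _ (hx0 i)]
  simp only [v, Option.elim, h_none, h_some] at hexpand
  rw [mul_sum]
  linear_combination -hexpand

namespace Complex

theorem two_mul_exp_mul_sinh (m t : ℂ) : 2 * exp m * sinh t = exp (m + t) - exp (m - t) := by
  rw [sinh, sub_eq_add_neg m, exp_add, exp_add]
  ring

end Complex

open Complex

theorem vRS_sub_eq_exp_div (ν γ u w : ℂ) :
    vRS ν γ (u - w) = (exp γ * exp (ν * u) - exp (-γ) * exp (ν * w)) /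
      (exp (ν * u) - exp (ν * w)) := by
  have hm : 2 * exp (ν * (u + w) / 2) ≠ 0 := by simp
  rw [vRS, ← mul_div_mul_left _ _ hm, two_mul_exp_mul_sinh, two_mul_exp_mul_sinh, ← exp_add,
    ← exp_add]
  congr 2 <;> congr 1 <;> ring

theorem vRS_neg_half_period {ν : ℂ} (γ : ℂ) (hν : ν ≠ 0) :
    vRS ν γ (-(Real.pi * I / ν)) = vRS ν γ (Real.pi * I / ν) := by
  have h : ν * (Real.pi * I / ν) / 2 = (Real.pi / 2 : ℂ) * I := by field_simp
  rw [vRS, vRS, mul_neg, neg_div, h]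
  simp [sinh_add, sinh_mul_I, cosh_mul_I]

theorem sum_prod_vRS_sub_eq_sinh_div {ι : Type*} [Fintype ι] [DecidableEq ι] {ν γ : ℂ}
    (hγ : sinh γ ≠ 0) {Q : ι → ℂ} (hQ : ∀ i k, i ≠ k → sinh (ν * (Q i - Q k) / 2) ≠ 0) :
    ∑ i, ∏ k ∈ univ.erase i, vRS ν γ (Q i - Q k) = sinh (γ * Fintype.card ι) / sinh γ := by
  have hx : Function.Injective fun i => exp (ν * Q i) := by
    intro i k (h : exp (ν * Q i) = exp (ν * Q k))
    by_contra hik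
    have hs := two_mul_exp_mul_sinh (ν * (Q i + Q k) / 2) (ν * (Q i - Q k) / 2)
    rw [show ν * (Q i + Q k) / 2 + ν * (Q i - Q k) / 2 = ν * Q i by ring,
      show ν * (Q i + Q k) / 2 - ν * (Q i - Q k) / 2 = ν * Q k by ring, h, sub_self] at hs
    exact hQ i k hik (by simpa using hs)
  have hv : ∀ i, ∏ k ∈ univ.erase i, vRS ν γ (Q i - Q k) = ∏ k ∈ univ.erase i,
      (exp γ * exp (ν * Q i) - exp (-γ) * exp (ν * Q k)) / (exp (ν * Q i) - exp (ν * Q k)) :=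
    fun i => prod_congr rfl fun k _ => vRS_sub_eq_exp_div ν γ (Q i) (Q k)
  have hliouville := sub_mul_sum_prod_div_sub_eq (exp γ) (exp (-γ)) hx fun _ => exp_ne_zero _
  simp only [← exp_nat_mul, mul_neg] at hliouville
  simp only [hv]
  rw [eq_div_iff hγ, sinh, sinh, mul_comm γ]
  linear_combination hliouville / 2

/-- The reflection `k ↦ -k` of `𝒜_K`: it swaps the two copies of `K` and fixes `0` and `0̄`. -/
def foldSwap (n : ℕ) : Equiv.Perm (Fin n ⊕ Fin n ⊕ Bool) :=
  (Equiv.sumAssoc _ _ _).symm.trans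
    (((Equiv.sumComm _ _).sumCongr (Equiv.refl _)).trans (Equiv.sumAssoc _ _ _))

theorem prod_erase_vRS_sub_eq_of_fold {n : ℕ} {ν : ℂ} (γ : ℂ) (hν : ν ≠ 0)
    {Q : Fin n ⊕ Fin n ⊕ Bool → ℂ} (hQneg : ∀ i, Q (Sum.inr (Sum.inl i)) = -Q (Sum.inl i))
    (hQ0 : Q (Sum.inr (Sum.inr false)) = 0)
    (hQb : Q (Sum.inr (Sum.inr true)) = (Real.pi : ℂ) * I / ν) :
    ∏ k ∈ univ.erase (Sum.inr (Sum.inr false)), vRS ν γ (Q (Sum.inr (Sum.inr false)) - Q k) =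
      ∏ k ∈ univ.erase (Sum.inr (Sum.inr false)), vRS ν γ (Q k) := by
  refine prod_equiv (foldSwap n) (fun k => ?_) fun k hk => ?_
  · simp only [mem_erase, mem_univ, and_true]
    exact ((foldSwap n).injective.ne_iff' rfl).symm
  rw [hQ0, zero_sub]
  rcases k with i | i | _ | _
  · exact congrArg _ (hQneg i).symm
  · exact congrArg _ (by rw [hQneg, neg_neg]; rfl)
  · simp at hk
  · exact hQb ▸ vRS_neg_half_period γ hν

/-- The index set `𝒜_K = K ∪ (−K) ∪ {0, 0̄}` is modelled by `Fin n ⊕ Fin n ⊕ Bool`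
(`n = |K|`), with positions `q_k`, `−q_k`, `q₀ = 0`, `q_{0̄} = T/2 = πi/ν`. -/
theorem U_K1_eq_calU_K1_sub_liouville (n : ℕ) (ν γ : ℂ) (hν : ν ≠ 0)
    (hγ : Complex.sinh γ ≠ 0) (q : Fin n → ℂ)
    (Q : Fin n ⊕ Fin n ⊕ Bool → ℂ)
    (hQ : ∀ i, Q (Sum.inl i) = q i)
    (hQ' : ∀ i, Q (Sum.inr (Sum.inl i)) = -q i)
    (hQ0 : Q (Sum.inr (Sum.inr false)) = 0)
    (hQb : Q (Sum.inr (Sum.inr true)) = (Real.pi : ℂ) * Complex.I / ν)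
    (hreg : ∀ i k : Fin n ⊕ Fin n ⊕ Bool, i ≠ k →
      Complex.sinh (ν * (Q i - Q k) / 2) ≠ 0) :
    -(∑ i ∈ Finset.univ.filter
          (fun i : Fin n ⊕ Fin n ⊕ Bool =>
            i ≠ Sum.inr (Sum.inr false) ∧ i ≠ Sum.inr (Sum.inr true)),
        ∏ k ∈ Finset.univ.erase i, vRS ν γ (Q i - Q k)) =
      ((∏ k ∈ Finset.univ.erase (Sum.inr (Sum.inr false) : Fin n ⊕ Fin n ⊕ Bool),
            vRS ν γ (Q k)) +
          ∏ k ∈ Finset.univ.erase (Sum.inr (Sum.inr true) : Fin n ⊕ Fin n ⊕ Bool),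
            vRS ν γ ((Real.pi : ℂ) * Complex.I / ν - Q k)) -
        Complex.sinh (γ * (2 * n + 2)) / Complex.sinh γ := by
  have hfull := sum_prod_vRS_sub_eq_sinh_div hγ hreg
  rw [Fintype.sum_eq_sum_filter_ne_ne_add (a := Sum.inr (Sum.inr false))
      (b := Sum.inr (Sum.inr true)) (by simp),
    prod_erase_vRS_sub_eq_of_fold γ hν (fun i => by rw [hQ, hQ']) hQ0 hQb, hQb] at hfull
  have hcard : ((Fintype.card (Fin n ⊕ Fin n ⊕ Bool) : ℕ) : ℂ) = 2 * n + 2 := by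
    push_cast [Fintype.card_sum, Fintype.card_fin, Fintype.card_bool]
    ring
  rw [hcard] at hfull
  linear_combination -hfull
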